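/- Posterior trace bound near time zero for the OU process: let y_t = e^{−t} y₀ + σ_t z with z standard Gaussian, and let Σ_t denote the posterior covariance Cov(y₀ | y_t). Then for every t ≥ 0, E[Tr(Σ_t)] ≤ d·(e^{2t} − 1); in particular, for t ∈ [0,1], E[Tr(Σ_t)] ≤ 2 d e² t. -/

import Mathlib

/-!
For fixed `y`, the posterior law of `y₀` given `y_t = y` has total variance at most its mean
squared distance to any fixed point. Choosing the point `e^t y` gives
`Tr Σ_t(y) ≤ E[‖y₀ - e^t y_t‖² | y_t = y] = e^{2t} E[‖y_t - e^{-t} y₀‖² | y_t = y]`, and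
averaging over `y_t` (Fubini) turns the right-hand side into
`e^{2t} E‖σ_t z‖² = e^{2t} d σ_t² = d (e^{2t} - 1)`.
The Gaussian second moment comes from differentiating `∫ exp (-b ‖v‖²) = (π / b) ^ (d / 2)` in `b`.
Finally `e^{2t} - 1 ≤ 2t e^{2t} ≤ 2 e² t` on `[0, 1]`.
-/

open MeasureTheory Real

noncomputable section

variable {d : ℕ}

/-- The OU variance `σ_t² = 1 − e^{−2t}`. -/
def sigSq (t : ℝ) : ℝ := 1 - Real.exp (-2 * t)

/-- The OU transition kernel `N(y; e^{−t} y₀, σ_t² I)`. -/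
def ouKernel (t : ℝ) (y y₀ : EuclideanSpace ℝ (Fin d)) : ℝ :=
  (2 * π * sigSq t) ^ (-(d : ℝ) / 2) *
    Real.exp (-‖y - Real.exp (-t) • y₀‖ ^ 2 / (2 * sigSq t))

/-- The OU-smoothed density at time `t`. -/
def ouDensity (q₀ : EuclideanSpace ℝ (Fin d) → ℝ) (t : ℝ)
    (y : EuclideanSpace ℝ (Fin d)) : ℝ :=
  ∫ y₀, q₀ y₀ * ouKernel t y y₀

/-- The posterior mean `μ_t(y) = E[y₀ | y_t = y]`. -/
def postMean (q₀ : EuclideanSpace ℝ (Fin d) → ℝ) (t : ℝ)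
    (y : EuclideanSpace ℝ (Fin d)) : EuclideanSpace ℝ (Fin d) :=
  (ouDensity q₀ t y)⁻¹ • ∫ y₀, (q₀ y₀ * ouKernel t y y₀) • y₀

/-- The posterior covariance `Σ_t(y) = Cov(y₀ | y_t = y)`, as a matrix. -/
def postCov (q₀ : EuclideanSpace ℝ (Fin d) → ℝ) (t : ℝ)
    (y : EuclideanSpace ℝ (Fin d)) (i j : Fin d) : ℝ :=
  (ouDensity q₀ t y)⁻¹ * (∫ y₀, q₀ y₀ * ouKernel t y y₀ * (y₀ i * y₀ j))
    - postMean q₀ t y i * postMean q₀ t y j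

open scoped RealInnerProductSpace

section GaussianMoment

variable {V : Type*} [NormedAddCommGroup V] [InnerProductSpace ℝ V] [FiniteDimensional ℝ V]
  [MeasurableSpace V] [BorelSpace V]

lemma integrable_exp_neg_mul_sq_norm {b : ℝ} (hb : 0 < b) :
    Integrable (fun v : V => rexp (-b * ‖v‖ ^ 2)) :=
  .of_integral_ne_zero (by rw [GaussianFourier.integral_rexp_neg_mul_sq_norm hb]; positivity)

lemma mul_exp_neg_mul_le (u : ℝ) {b : ℝ} (hb : 0 < b) :
    u * rexp (-b * u) ≤ 2 / b * rexp (-(b / 2) * u) := by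
  have hsplit : rexp (-b * u) = rexp (-(b / 2) * u) * rexp (-(b / 2) * u) := by
    rw [← exp_add]; ring_nf
  have hinv : rexp (b / 2 * u) * rexp (-(b / 2) * u) = 1 := by
    rw [← exp_add, neg_mul, add_neg_cancel, exp_zero]
  have hu : u * rexp (-(b / 2) * u) ≤ 2 / b := by
    rw [le_div_iff₀ hb]
    nlinarith [add_one_le_exp (b / 2 * u), exp_pos (-(b / 2) * u)]
  rw [hsplit, ← mul_assoc]
  exact mul_le_mul_of_nonneg_right hu (exp_pos _).le

lemma integrable_sq_norm_mul_exp_neg_mul_sq_norm {b : ℝ} (hb : 0 < b) :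
    Integrable (fun v : V => ‖v‖ ^ 2 * rexp (-b * ‖v‖ ^ 2)) := by
  refine ((integrable_exp_neg_mul_sq_norm (half_pos hb)).const_mul (2 / b)).mono'
    (by fun_prop) (.of_forall fun v => ?_)
  rw [Real.norm_of_nonneg (by positivity)]
  exact mul_exp_neg_mul_le _ hb

lemma integral_sq_norm_mul_exp_neg_mul_sq_norm {b : ℝ} (hb : 0 < b) :
    ∫ v : V, ‖v‖ ^ 2 * rexp (-b * ‖v‖ ^ 2)
      = (Module.finrank ℝ V : ℝ) / 2 / b * (π / b) ^ ((Module.finrank ℝ V : ℝ) / 2) := by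
  set c : ℝ := (Module.finrank ℝ V : ℝ) / 2
  have hb2 : 0 < b / 2 := half_pos hb
  have hderiv : HasDerivAt (fun x : ℝ => ∫ v : V, rexp (-x * ‖v‖ ^ 2))
      (∫ v : V, -(‖v‖ ^ 2 * rexp (-b * ‖v‖ ^ 2))) b := by
    refine (hasDerivAt_integral_of_dominated_loc_of_deriv_le
      (F := fun x (v : V) => rexp (-x * ‖v‖ ^ 2))
      (F' := fun x (v : V) => -(‖v‖ ^ 2 * rexp (-x * ‖v‖ ^ 2)))
      (bound := fun v : V => ‖v‖ ^ 2 * rexp (-(b / 2) * ‖v‖ ^ 2))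
      (Metric.ball_mem_nhds b hb2) (.of_forall fun _ => by fun_prop)
      (integrable_exp_neg_mul_sq_norm hb) (by fun_prop) (.of_forall fun v x hx => ?_)
      (integrable_sq_norm_mul_exp_neg_mul_sq_norm hb2) (.of_forall fun v x _ => ?_)).2
    · have hx : b / 2 < x := by
        rw [Metric.mem_ball, Real.dist_eq, abs_lt] at hx; linarith
      rw [norm_neg, Real.norm_of_nonneg (by positivity)]
      gcongr
    · simpa [mul_comm] using ((hasDerivAt_id x).neg.mul_const (‖v‖ ^ 2)).exp
  have hgauss : HasDerivAt (fun x : ℝ => ∫ v : V, rexp (-x * ‖v‖ ^ 2))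
      (-π / b ^ 2 * c * (π / b) ^ (c - 1)) b := by
    have hinv : HasDerivAt (fun x : ℝ => π / x) (-π / b ^ 2) b := by
      simpa [div_eq_mul_inv] using (hasDerivAt_inv hb.ne').const_mul π
    refine (hinv.rpow_const (.inl (div_pos pi_pos hb).ne')).congr_of_eventuallyEq ?_
    filter_upwards [eventually_gt_nhds hb] with x hx
    exact GaussianFourier.integral_rexp_neg_mul_sq_norm hx
  have hpow : (π / b) ^ c = (π / b) ^ (c - 1) * (π / b) := by
    rw [← rpow_add_one (div_pos pi_pos hb).ne']; ring_nf
  have h := hderiv.unique hgauss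
  rw [integral_neg, neg_eq_iff_eq_neg] at h
  rw [h, hpow]
  field_simp

end GaussianMoment

section WeightedVariance

variable {E : Type*} [NormedAddCommGroup E] [InnerProductSpace ℝ E]
  [MeasurableSpace E] [BorelSpace E] [SecondCountableTopology E] {μ : Measure E} {w : E → ℝ}

/-- Mean and total variance of the probability measure with density `w / ∫ w` with respect
to `μ`. -/
def weightedMean (μ : Measure E) (w : E → ℝ) : E :=
  (∫ x, w x ∂μ)⁻¹ • ∫ x, w x • x ∂μ

def weightedVariance (μ : Measure E) (w : E → ℝ) : ℝ :=
  (∫ x, w x ∂μ)⁻¹ * ∫ x, w x * ‖x‖ ^ 2 ∂μ - ‖weightedMean μ w‖ ^ 2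

lemma MeasureTheory.Integrable.smul_self (hw : Integrable w μ)
    (hw2 : Integrable (fun x => w x * ‖x‖ ^ 2) μ) : Integrable (fun x => w x • x) μ := by
  refine (hw.norm.add hw2.norm).mono' (hw.aestronglyMeasurable.smul aestronglyMeasurable_id)
    (.of_forall fun x => ?_)
  simp only [Pi.add_apply, norm_smul, norm_mul, norm_pow, norm_norm]
  nlinarith [mul_nonneg (norm_nonneg (w x)) (sq_nonneg (‖x‖ - 1)), norm_nonneg (w x)]

variable [CompleteSpace E]

lemma integral_mul_norm_sub_sq (hw : Integrable w μ)
    (hw2 : Integrable (fun x => w x * ‖x‖ ^ 2) μ) (c : E) :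
    ∫ x, w x * ‖x - c‖ ^ 2 ∂μ
      = ∫ x, w x * ‖x‖ ^ 2 ∂μ - 2 * ⟪c, ∫ x, w x • x ∂μ⟫ + (∫ x, w x ∂μ) * ‖c‖ ^ 2 := by
  have hinner : Integrable (fun x => ⟪c, w x • x⟫) μ := (hw.smul_self hw2).const_inner c
  have hexpand : ∀ x, w x * ‖x - c‖ ^ 2 = w x * ‖x‖ ^ 2 - 2 * ⟪c, w x • x⟫ + ‖c‖ ^ 2 * w x := by
    intro x
    rw [norm_sub_sq_real, real_inner_smul_right, real_inner_comm]
    ring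
  have hlin : Integrable (fun x => w x * ‖x‖ ^ 2 - 2 * ⟪c, w x • x⟫) μ :=
    hw2.sub (hinner.const_mul 2)
  simp_rw [hexpand]
  rw [integral_add hlin (hw.const_mul _),
    integral_sub hw2 (hinner.const_mul 2), integral_const_mul, integral_const_mul,
    integral_inner (hw.smul_self hw2)]
  ring

lemma integral_mul_norm_sub_sq_eq (hw : Integrable w μ)
    (hw2 : Integrable (fun x => w x * ‖x‖ ^ 2) μ) (hρ : ∫ x, w x ∂μ ≠ 0) (c : E) :
    ∫ x, w x * ‖x - c‖ ^ 2 ∂μ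
      = (∫ x, w x ∂μ) * weightedVariance μ w
        + (∫ x, w x ∂μ) * ‖c - weightedMean μ w‖ ^ 2 := by
  rw [integral_mul_norm_sub_sq hw hw2, weightedVariance, weightedMean, norm_sub_sq_real,
    real_inner_smul_right, norm_smul, mul_pow, Real.norm_eq_abs, sq_abs]
  field_simp
  ring

lemma mul_weightedVariance_nonneg (hw0 : 0 ≤ w) (hw : Integrable w μ)
    (hw2 : Integrable (fun x => w x * ‖x‖ ^ 2) μ) :
    0 ≤ (∫ x, w x ∂μ) * weightedVariance μ w := by
  by_cases hρ : ∫ x, w x ∂μ = 0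
  · rw [hρ, zero_mul]
  · have h := integral_mul_norm_sub_sq_eq hw hw2 hρ (weightedMean μ w)
    rw [sub_self, norm_zero, sq, mul_zero, mul_zero, add_zero] at h
    exact h ▸ integral_nonneg fun x => mul_nonneg (hw0 x) (sq_nonneg _)

lemma mul_weightedVariance_le (hw0 : 0 ≤ w) (hw : Integrable w μ)
    (hw2 : Integrable (fun x => w x * ‖x‖ ^ 2) μ) (c : E) :
    (∫ x, w x ∂μ) * weightedVariance μ w ≤ ∫ x, w x * ‖x - c‖ ^ 2 ∂μ := by
  by_cases hρ : ∫ x, w x ∂μ = 0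
  · rw [hρ, zero_mul]
    exact integral_nonneg fun x => mul_nonneg (hw0 x) (sq_nonneg _)
  · rw [integral_mul_norm_sub_sq_eq hw hw2 hρ]
    exact le_add_of_nonneg_right (mul_nonneg (integral_nonneg hw0) (sq_nonneg _))

end WeightedVariance

lemma sum_integral_mul_mul_self {ι : Type*} [Fintype ι] {μ : Measure (EuclideanSpace ℝ ι)}
    {w : EuclideanSpace ℝ ι → ℝ} (hw : AEStronglyMeasurable w μ)
    (hw2 : Integrable (fun x => w x * ‖x‖ ^ 2) μ) :
    ∑ i, ∫ x, w x * (x i * x i) ∂μ = ∫ x, w x * ‖x‖ ^ 2 ∂μ := by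
  have hcoord : ∀ i, Integrable (fun x : EuclideanSpace ℝ ι => w x * (x i * x i)) μ := by
    refine fun i => hw2.norm.mono' (hw.mul (by fun_prop)) (.of_forall fun x => ?_)
    simp only [norm_mul, norm_pow, norm_norm, ← sq]
    gcongr
    exact PiLp.norm_apply_le x i
  rw [← integral_finsetSum _ fun i _ => hcoord i]
  congr 1 with x
  rw [EuclideanSpace.real_norm_sq_eq, Finset.mul_sum]
  simp_rw [sq]

lemma norm_sub_exp_smul {E : Type*} [NormedAddCommGroup E] [NormedSpace ℝ E] (t : ℝ) (x y : E) :
    ‖x - rexp t • y‖ = rexp t * ‖y - rexp (-t) • x‖ := by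
  have h : x - rexp t • y = (-rexp t) • (y - rexp (-t) • x) := by
    rw [smul_sub, smul_smul, neg_mul, ← exp_add, add_neg_cancel, exp_zero, neg_smul, neg_smul,
      one_smul]
    abel
  rw [h, norm_smul, norm_neg, norm_of_nonneg (exp_pos t).le]

lemma sigSq_pos {t : ℝ} (ht : 0 < t) : 0 < sigSq t := by
  rw [sigSq, sub_pos, exp_lt_one_iff]
  linarith

lemma exp_two_mul_mul_sigSq (t : ℝ) : rexp (2 * t) * sigSq t = rexp (2 * t) - 1 := by
  rw [sigSq, mul_sub, mul_one, ← exp_add, show 2 * t + -2 * t = 0 by ring, exp_zero]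

lemma ouKernel_nonneg {t : ℝ} (hs : 0 ≤ sigSq t) (y y₀ : EuclideanSpace ℝ (Fin d)) :
    0 ≤ ouKernel t y y₀ := by
  unfold ouKernel
  positivity

lemma ouKernel_le {t : ℝ} (hs : 0 ≤ sigSq t) (y y₀ : EuclideanSpace ℝ (Fin d)) :
    ouKernel t y y₀ ≤ (2 * π * sigSq t) ^ (-(d : ℝ) / 2) := by
  refine mul_le_of_le_one_right (by positivity) (exp_le_one_iff.2 ?_)
  exact div_nonpos_of_nonpos_of_nonneg (neg_nonpos.2 (by positivity)) (by positivity)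

lemma continuous_ouKernel (t : ℝ) :
    Continuous (fun p : EuclideanSpace ℝ (Fin d) × EuclideanSpace ℝ (Fin d) =>
      ouKernel t p.1 p.2) := by
  unfold ouKernel
  fun_prop

lemma ouKernel_mul_sq_norm_sub (t : ℝ) (y y₀ : EuclideanSpace ℝ (Fin d)) :
    ouKernel t y y₀ * ‖y - rexp (-t) • y₀‖ ^ 2
      = (2 * π * sigSq t) ^ (-(d : ℝ) / 2) * (‖y - rexp (-t) • y₀‖ ^ 2
          * rexp (-(1 / (2 * sigSq t)) * ‖y - rexp (-t) • y₀‖ ^ 2)) := by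
  unfold ouKernel
  ring_nf

lemma integrable_ouKernel_mul_sq_norm_sub {t : ℝ} (hs : 0 < sigSq t)
    (y₀ : EuclideanSpace ℝ (Fin d)) :
    Integrable (fun y => ouKernel t y y₀ * ‖y - rexp (-t) • y₀‖ ^ 2) := by
  simp_rw [ouKernel_mul_sq_norm_sub]
  exact ((integrable_sq_norm_mul_exp_neg_mul_sq_norm (by positivity)).const_mul _).comp_sub_right _

lemma integral_ouKernel_mul_sq_norm_sub {t : ℝ} (hs : 0 < sigSq t)
    (y₀ : EuclideanSpace ℝ (Fin d)) :
    ∫ y, ouKernel t y y₀ * ‖y - rexp (-t) • y₀‖ ^ 2 = d * sigSq t := by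
  simp_rw [ouKernel_mul_sq_norm_sub]
  rw [integral_const_mul, integral_sub_right_eq_self
      (fun v => ‖v‖ ^ 2 * rexp (-(1 / (2 * sigSq t)) * ‖v‖ ^ 2)),
    integral_sq_norm_mul_exp_neg_mul_sq_norm (by positivity), finrank_euclideanSpace_fin,
    show π / (1 / (2 * sigSq t)) = 2 * π * sigSq t by field_simp, neg_div,
    rpow_neg (by positivity)]
  field_simp

lemma mul_ouKernel_mul_sq_norm_sub_exp_smul (a t : ℝ) (y y₀ : EuclideanSpace ℝ (Fin d)) :
    a * ouKernel t y y₀ * ‖y₀ - rexp t • y‖ ^ 2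
      = rexp (2 * t) * a * (ouKernel t y y₀ * ‖y - rexp (-t) • y₀‖ ^ 2) := by
  rw [norm_sub_exp_smul, mul_pow, ← exp_nat_mul]
  push_cast
  ring

lemma integrable_mul_ouKernel_mul_sq_norm_sub_exp_smul {t : ℝ} (hs : 0 < sigSq t) (a : ℝ)
    (y₀ : EuclideanSpace ℝ (Fin d)) :
    Integrable (fun y => a * ouKernel t y y₀ * ‖y₀ - rexp t • y‖ ^ 2) := by
  simp_rw [mul_ouKernel_mul_sq_norm_sub_exp_smul]
  exact (integrable_ouKernel_mul_sq_norm_sub hs y₀).const_mul _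

lemma integral_mul_ouKernel_mul_sq_norm_sub_exp_smul {t : ℝ} (hs : 0 < sigSq t) (a : ℝ)
    (y₀ : EuclideanSpace ℝ (Fin d)) :
    ∫ y, a * ouKernel t y y₀ * ‖y₀ - rexp t • y‖ ^ 2 = d * (rexp (2 * t) - 1) * a := by
  simp_rw [mul_ouKernel_mul_sq_norm_sub_exp_smul]
  rw [integral_const_mul, integral_ouKernel_mul_sq_norm_sub hs, ← exp_two_mul_mul_sigSq]
  ring

/-- At `t = 0` the normalising constant of the kernel is the junk value `0 ^ (-d / 2) = 0`. -/
lemma ouDensity_zero_mul_sum_postCov (q₀ : EuclideanSpace ℝ (Fin d) → ℝ)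
    (y : EuclideanSpace ℝ (Fin d)) : ouDensity q₀ 0 y * ∑ i, postCov q₀ 0 y i i = 0 := by
  rcases eq_or_ne d 0 with rfl | hd
  · simp
  · have hK : ∀ y₀, ouKernel 0 y y₀ = (0 : ℝ) := fun y₀ => by
      simp [ouKernel, sigSq, hd]
    simp [ouDensity, hK]

section Posterior

variable {q₀ : EuclideanSpace ℝ (Fin d) → ℝ} {t : ℝ}

lemma MeasureTheory.Integrable.mul_ouKernel {f : EuclideanSpace ℝ (Fin d) → ℝ} (hf : Integrable f)
    (hs : 0 ≤ sigSq t) (y : EuclideanSpace ℝ (Fin d)) :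
    Integrable (fun y₀ => f y₀ * ouKernel t y y₀) :=
  hf.mul_bdd
    ((continuous_ouKernel t).comp (continuous_const.prodMk continuous_id)).aestronglyMeasurable
    (.of_forall fun y₀ => (norm_of_nonneg (ouKernel_nonneg hs y y₀)).trans_le (ouKernel_le hs y y₀))

lemma integrable_mul_ouKernel_mul_sq_norm (hmom : Integrable (fun y => q₀ y * ‖y‖ ^ 2))
    (hs : 0 ≤ sigSq t) (y : EuclideanSpace ℝ (Fin d)) :
    Integrable (fun y₀ => q₀ y₀ * ouKernel t y y₀ * ‖y₀‖ ^ 2) :=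
  (hmom.mul_ouKernel hs y).congr (.of_forall fun _ => by ring)

lemma sum_postCov_self (hq : Integrable q₀) (hmom : Integrable (fun y => q₀ y * ‖y‖ ^ 2))
    (hs : 0 ≤ sigSq t) (y : EuclideanSpace ℝ (Fin d)) :
    ∑ i, postCov q₀ t y i i = weightedVariance volume (fun y₀ => q₀ y₀ * ouKernel t y y₀) := by
  simp only [postCov, Finset.sum_sub_distrib, ← Finset.mul_sum]
  rw [sum_integral_mul_mul_self (hq.mul_ouKernel hs y).aestronglyMeasurable
      (integrable_mul_ouKernel_mul_sq_norm hmom hs y), weightedVariance,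
    EuclideanSpace.real_norm_sq_eq]
  simp only [sq]
  rfl

lemma ouDensity_mul_sum_postCov_nonneg (hq0 : ∀ y, 0 ≤ q₀ y) (hq : Integrable q₀)
    (hmom : Integrable (fun y => q₀ y * ‖y‖ ^ 2)) (hs : 0 ≤ sigSq t)
    (y : EuclideanSpace ℝ (Fin d)) : 0 ≤ ouDensity q₀ t y * ∑ i, postCov q₀ t y i i := by
  rw [sum_postCov_self hq hmom hs]
  exact mul_weightedVariance_nonneg (fun y₀ => mul_nonneg (hq0 y₀) (ouKernel_nonneg hs y y₀))
    (hq.mul_ouKernel hs y) (integrable_mul_ouKernel_mul_sq_norm hmom hs y)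

lemma ouDensity_mul_sum_postCov_le (hq0 : ∀ y, 0 ≤ q₀ y) (hq : Integrable q₀)
    (hmom : Integrable (fun y => q₀ y * ‖y‖ ^ 2)) (hs : 0 ≤ sigSq t)
    (y : EuclideanSpace ℝ (Fin d)) :
    ouDensity q₀ t y * ∑ i, postCov q₀ t y i i
      ≤ ∫ y₀, q₀ y₀ * ouKernel t y y₀ * ‖y₀ - rexp t • y‖ ^ 2 := by
  rw [sum_postCov_self hq hmom hs]
  exact mul_weightedVariance_le (fun y₀ => mul_nonneg (hq0 y₀) (ouKernel_nonneg hs y y₀))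
    (hq.mul_ouKernel hs y) (integrable_mul_ouKernel_mul_sq_norm hmom hs y) _

lemma integrable_prod_mul_ouKernel_mul_sq_norm_sub_exp_smul (hq0 : ∀ y, 0 ≤ q₀ y)
    (hmeas : Measurable q₀) (hq : Integrable q₀) (hs : 0 < sigSq t) :
    Integrable (fun p : EuclideanSpace ℝ (Fin d) × EuclideanSpace ℝ (Fin d) =>
      q₀ p.2 * ouKernel t p.1 p.2 * ‖p.2 - rexp t • p.1‖ ^ 2) (volume.prod volume) := by
  refine (integrable_prod_iff' ?_).2 ⟨.of_forall fun y₀ =>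
    integrable_mul_ouKernel_mul_sq_norm_sub_exp_smul hs (q₀ y₀) y₀, ?_⟩
  · exact ((hmeas.comp measurable_snd).mul (continuous_ouKernel t).measurable
      |>.mul (by fun_prop)).aestronglyMeasurable
  · refine (hq.const_mul (d * (rexp (2 * t) - 1))).congr (.of_forall fun y₀ => ?_)
    simp_rw [norm_of_nonneg (mul_nonneg (mul_nonneg (hq0 y₀) (ouKernel_nonneg hs.le _ y₀))
      (sq_nonneg _))]
    exact (integral_mul_ouKernel_mul_sq_norm_sub_exp_smul hs _ y₀).symm

lemma integral_integral_mul_ouKernel_mul_sq_norm_sub_exp_smul (hq0 : ∀ y, 0 ≤ q₀ y)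
    (hmeas : Measurable q₀) (hq : Integrable q₀) (hprob : ∫ y, q₀ y = 1) (hs : 0 < sigSq t) :
    ∫ y, ∫ y₀, q₀ y₀ * ouKernel t y y₀ * ‖y₀ - rexp t • y‖ ^ 2 = d * (rexp (2 * t) - 1) := by
  rw [integral_integral_swap
    (integrable_prod_mul_ouKernel_mul_sq_norm_sub_exp_smul hq0 hmeas hq hs)]
  simp_rw [integral_mul_ouKernel_mul_sq_norm_sub_exp_smul hs]
  rw [integral_const_mul, hprob, mul_one]

end Posterior

lemma exp_two_mul_sub_one_le {t : ℝ} (ht0 : 0 ≤ t) (ht1 : t ≤ 1) :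
    rexp (2 * t) - 1 ≤ 2 * rexp 2 * t := by
  have hinv : rexp (2 * t) * rexp (-(2 * t)) = 1 := by rw [← exp_add, add_neg_cancel, exp_zero]
  calc rexp (2 * t) - 1 ≤ 2 * t * rexp (2 * t) := by
        nlinarith [one_sub_le_exp_neg (2 * t), exp_pos (2 * t)]
    _ ≤ 2 * t * rexp 2 := by gcongr; linarith
    _ = 2 * rexp 2 * t := by ring

/-- Posterior trace bound near time zero for the OU process: with `Σ_t` the
posterior covariance `Cov(y₀ | y_t)`, for every `t ≥ 0` one has
`E[Tr Σ_t] ≤ d (e^{2t} − 1)`; in particular, for `t ∈ [0,1]`, `E[Tr Σ_t] ≤ 2 d e² t`. -/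
theorem posterior_trace_bound
    (q₀ : EuclideanSpace ℝ (Fin d) → ℝ)
    (hq0 : ∀ y, 0 ≤ q₀ y) (hmeas : Measurable q₀)
    (hprob : ∫ y, q₀ y = 1)
    (hmom : Integrable (fun y => q₀ y * ‖y‖ ^ 2)) :
    (∀ t : ℝ, 0 ≤ t →
      ∫ y, ouDensity q₀ t y * ∑ i, postCov q₀ t y i i ≤ d * (Real.exp (2 * t) - 1))
    ∧ ∀ t : ℝ, t ∈ Set.Icc (0 : ℝ) 1 →
      ∫ y, ouDensity q₀ t y * ∑ i, postCov q₀ t y i i ≤ 2 * d * Real.exp 2 * t := by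
  have hq : Integrable q₀ := .of_integral_ne_zero (by rw [hprob]; exact one_ne_zero)
  have hbound : ∀ t : ℝ, 0 ≤ t →
      ∫ y, ouDensity q₀ t y * ∑ i, postCov q₀ t y i i ≤ d * (rexp (2 * t) - 1) := by
    intro t ht
    rcases ht.eq_or_lt with rfl | ht
    · simp [ouDensity_zero_mul_sum_postCov]
    have hs := sigSq_pos ht
    rw [← integral_integral_mul_ouKernel_mul_sq_norm_sub_exp_smul hq0 hmeas hq hprob hs]
    exact integral_mono_of_nonneg
      (.of_forall (ouDensity_mul_sum_postCov_nonneg hq0 hq hmom hs.le))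
      (integrable_prod_mul_ouKernel_mul_sq_norm_sub_exp_smul hq0 hmeas hq hs).integral_prod_left
      (.of_forall (ouDensity_mul_sum_postCov_le hq0 hq hmom hs.le))
  refine ⟨hbound, fun t ⟨ht0, ht1⟩ => (hbound t ht0).trans ?_⟩
  calc (d : ℝ) * (rexp (2 * t) - 1) ≤ d * (2 * rexp 2 * t) := by
        gcongr; exact exp_two_mul_sub_one_le ht0 ht1
    _ = 2 * d * rexp 2 * t := by ring

end
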